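/- arXiv:2510.12718 — 7 statements merged into one kernel-verified Lean document; each statement's English description precedes it below -/
import Mathlib

section
/- Let f be a holomorphic function from the open unit disk D to the closed unit disk, realized as f(z) = A + zB(I - zD)^{-1}C for all z in D, where V = [[A,B],[C,D]] : C ⊕ H → C ⊕ H is a unitary operator on C ⊕ H for some Hilbert space H. Then for every λ in D, f(λ) = 0 if and only if λ is an eigenvalue of D*. -/
/-!
If `f λ = 0`, the state vector `w = (I - λD)⁻¹ C 1` is an eigenvector of `D*` for `λ`: applying
`D*` to `w = C 1 + λ D w` and using the isometry relations `D* C 1 = -A B* 1` and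
`D* D = I - B* B` gives `D* w = λ w - (A + λ B w) B* 1 = λ w`, and `w ≠ 0` because
`|A|² + ‖C 1‖² = 1`.
Conversely, if `D* v = λ v` and `c = C* v`, the co-isometry relation `C C* + D D* = I` reads
`(I - λD) v = c C 1`, so `v = c w` and hence `c ≠ 0`; the relation `A C* + B D* = 0` applied to `v`
then becomes `c f λ = 0`.
-/

open ContinuousLinearMap

namespace ContinuousLinearMap

theorem apply_eq_smul_apply_one {R M : Type*} [Semiring R] [TopologicalSpace R]
    [TopologicalSpace M] [AddCommMonoid M] [Module R M] (L : R →L[R] M) (c : R) :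
    L c = c • L 1 := by
  simpa using L.map_smul c 1

section RingInverse

variable {R E : Type*} [Semiring R] [TopologicalSpace E] [AddCommMonoid E] [Module R E]
  {T : E →L[R] E}

theorem apply_ringInverse_apply (hT : IsUnit T) (x : E) : T (Ring.inverse T x) = x := by
  simpa using congr($(Ring.mul_inverse_cancel T hT) x)

theorem ringInverse_apply_apply (hT : IsUnit T) (x : E) : Ring.inverse T (T x) = x := by
  simpa using congr($(Ring.inverse_mul_cancel T hT) x)

end RingInverse

theorem norm_le_one_of_adjoint_comp_add_adjoint_comp_eq_id {𝕜 E F G : Type*} [RCLike 𝕜]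
    [NormedAddCommGroup E] [InnerProductSpace 𝕜 E] [CompleteSpace E]
    [NormedAddCommGroup F] [InnerProductSpace 𝕜 F] [CompleteSpace F]
    [NormedAddCommGroup G] [InnerProductSpace 𝕜 G] [CompleteSpace G] {B : E →L[𝕜] F} {D : E →L[𝕜] G}
    (h : ∀ x, adjoint B (B x) + adjoint D (D x) = x) : ‖D‖ ≤ 1 := by
  refine D.opNorm_le_bound zero_le_one fun x => ?_
  have hsq : ‖B x‖ ^ 2 + ‖D x‖ ^ 2 = ‖x‖ ^ 2 := by
    have := congr(inner 𝕜 x $(h x))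
    rw [inner_add_right, adjoint_inner_right, adjoint_inner_right, inner_self_eq_norm_sq_to_K,
      inner_self_eq_norm_sq_to_K, inner_self_eq_norm_sq_to_K] at this
    exact_mod_cast this
  rw [one_mul]
  exact (pow_le_pow_iff_left₀ (norm_nonneg _) (norm_nonneg _) two_ne_zero).mp
    (by linarith [sq_nonneg ‖B x‖])

end ContinuousLinearMap

theorem isUnit_one_sub_smul_of_norm_le_one {𝕜 R : Type*} [NormedField 𝕜] [NormedRing R]
    [NormedSpace 𝕜 R] [HasSummableGeomSeries R] {a : R} (ha : ‖a‖ ≤ 1) {z : 𝕜} (hz : ‖z‖ < 1) :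
    IsUnit (1 - z • a) :=
  isUnit_one_sub_of_norm_lt_one <|
    (norm_smul_le z a).trans_lt (mul_lt_one_of_nonneg_of_lt_one_left (norm_nonneg z) hz ha)

section UnitaryRealization

variable {H : Type*} [NormedAddCommGroup H] [InnerProductSpace ℂ H] [CompleteSpace H]
  {A : ℂ} {B : H →L[ℂ] ℂ} {C : ℂ →L[ℂ] H} {D : H →L[ℂ] H} {lam : ℂ} {w : H}

theorem adjoint_apply_eq_smul_of_add_mul_eq_zero (h3 : adjoint B A + adjoint D (C 1) = 0)
    (h4 : ∀ h : H, adjoint B (B h) + adjoint D (D h) = h) (hw : (1 - lam • D) w = C 1)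
    (hA : A + lam * B w = 0) : adjoint D w = lam • w := by
  have hDC : adjoint D (C 1) = -(A • adjoint B 1) := by
    rwa [apply_eq_smul_apply_one (adjoint B) A, add_comm, ← eq_neg_iff_add_eq_zero] at h3
  have hDD : adjoint D (D w) = w - B w • adjoint B 1 := by
    rw [eq_sub_iff_add_eq, add_comm, ← apply_eq_smul_apply_one, h4]
  have hw' : w = C 1 + lam • D w := by
    rw [← hw, sub_apply, smul_apply, one_apply_eq_self, sub_add_cancel]
  calc adjoint D w = adjoint D (C 1) + lam • adjoint D (D w) := by
        conv_lhs => rw [hw']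
        rw [map_add, map_smul]
    _ = lam • w - (A + lam * B w) • adjoint B 1 := by rw [hDC, hDD]; module
    _ = lam • w := by rw [hA, zero_smul, sub_zero]

theorem ne_zero_of_add_mul_eq_zero (h1 : star A * A + adjoint C (C 1) = 1)
    (hw : (1 - lam • D) w = C 1) (hA : A + lam * B w = 0) : w ≠ 0 := by
  rintro rfl
  have hC : C 1 = 0 := by simpa using hw.symm
  have hA : A = 0 := by simpa using hA
  simp [hC, hA] at h1

theorem add_mul_eq_zero_of_adjoint_apply_eq_smul
    (h6 : ∀ v : H, A * adjoint C v + B (adjoint D v) = 0)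
    (h8 : ∀ v : H, C (adjoint C v) + D (adjoint D v) = v)
    (hT : Function.Injective ⇑(1 - lam • D)) (hw : (1 - lam • D) w = C 1)
    {v : H} (hv : v ≠ 0) (hDv : adjoint D v = lam • v) : A + lam * B w = 0 := by
  obtain ⟨c, hc⟩ : ∃ c, adjoint C v = c := ⟨_, rfl⟩
  have hTv : (1 - lam • D) v = c • C 1 := by
    have := h8 v
    rw [hc, hDv, map_smul] at this
    rw [sub_apply, one_apply_eq_self, smul_apply, ← apply_eq_smul_apply_one]
    exact (eq_sub_of_add_eq this).symm
  have hvw : v = c • w := hT (by rw [hTv, map_smul, hw])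
  have hc0 : c ≠ 0 := by
    rintro rfl
    exact hv (by rw [hvw, zero_smul])
  have := h6 v
  rw [hc, hDv, map_smul, hvw, map_smul, smul_eq_mul, smul_eq_mul] at this
  exact (mul_eq_zero.mp (by linear_combination this : c * (A + lam * B w) = 0)).resolve_left hc0

end UnitaryRealization

theorem stmt0_general {H : Type*} [NormedAddCommGroup H] [InnerProductSpace ℂ H] [CompleteSpace H]
    (A : ℂ) (B : H →L[ℂ] ℂ) (C : ℂ →L[ℂ] H) (D : H →L[ℂ] H)
    -- V*V = I on ℂ ⊕ H
    (h1 : star A * A + adjoint C (C 1) = 1)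
    (h3 : adjoint B A + adjoint D (C 1) = 0)
    (h4 : ∀ h : H, adjoint B (B h) + adjoint D (D h) = h)
    -- V V* = I on ℂ ⊕ H
    (h6 : ∀ v : H, A * adjoint C v + B (adjoint D v) = 0)
    (h8 : ∀ v : H, C (adjoint C v) + D (adjoint D v) = v)
    (f : ℂ → ℂ)
    (hf : ∀ z : ℂ, f z = A + z * B (Ring.inverse (1 - z • D) (C 1))) :
    ∀ lam ∈ Metric.ball (0 : ℂ) 1,
      (f lam = 0 ↔ ∃ v : H, v ≠ 0 ∧ adjoint D v = lam • v) := by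
  intro lam hlam
  have hT : IsUnit (1 - lam • D) := isUnit_one_sub_smul_of_norm_le_one
    (norm_le_one_of_adjoint_comp_add_adjoint_comp_eq_id h4) (mem_ball_zero_iff.mp hlam)
  set w := Ring.inverse (1 - lam • D) (C 1)
  have hw : (1 - lam • D) w = C 1 := apply_ringInverse_apply hT _
  rw [hf]
  constructor
  · intro hA
    exact ⟨w, ne_zero_of_add_mul_eq_zero h1 hw hA,
      adjoint_apply_eq_smul_of_add_mul_eq_zero h3 h4 hw hA⟩
  · rintro ⟨v, hv, hDv⟩
    exact add_mul_eq_zero_of_adjoint_apply_eq_smul h6 h8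
      (Function.LeftInverse.injective (ringInverse_apply_apply hT)) hw hv hDv

/-- Zeros of a Schur function on the disk, given by a unitary realization
`f(z) = A + zB(I - zD)⁻¹C`, are exactly the eigenvalues of `D*` inside the disk. -/
theorem stmt0 {H : Type*} [NormedAddCommGroup H] [InnerProductSpace ℂ H] [CompleteSpace H]
    (A : ℂ) (B : H →L[ℂ] ℂ) (C : ℂ →L[ℂ] H) (D : H →L[ℂ] H)
    -- V*V = I on ℂ ⊕ H
    (h1 : star A * A + adjoint C (C 1) = 1)
    (h2 : ∀ h : H, star A * B h + adjoint C (D h) = 0)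
    (h3 : adjoint B A + adjoint D (C 1) = 0)
    (h4 : ∀ h : H, adjoint B (B h) + adjoint D (D h) = h)
    -- V V* = I on ℂ ⊕ H
    (h5 : A * star A + B (adjoint B 1) = 1)
    (h6 : ∀ v : H, A * adjoint C v + B (adjoint D v) = 0)
    (h7 : C (star A) + D (adjoint B 1) = 0)
    (h8 : ∀ v : H, C (adjoint C v) + D (adjoint D v) = v)
    (f : ℂ → ℂ)
    (hf : ∀ z : ℂ, f z = A + z * B (Ring.inverse (1 - z • D) (C 1))) :
    ∀ lam ∈ Metric.ball (0 : ℂ) 1,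
      (f lam = 0 ↔ ∃ v : H, v ≠ 0 ∧ adjoint D v = lam • v) :=
  stmt0_general A B C D h1 h3 h4 h6 h8 f hf
end

section
/- Let f be a holomorphic self-map of the Euclidean unit ball B_d into the closed unit disk given by the realization f(z) = A + B(I - Σ_j z_j D_j)^{-1}(Σ_j z_j C_j), where the colligation V = [[A,B],[C,D]] : C ⊕ H → C ⊕ (H ⊗ C^d) is unitary. If λ ∈ B_d satisfies f(λ) = 0, then λ is a row eigenvalue of the row operator D* = [D_1* … D_d*] : H ⊗ C^d → H, with row eigenvector v^λ := C + D L(λ), where L(λ) := (I - Σ_j λ_j D_j)^{-1}(Σ_j λ_j C_j). -/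
open ContinuousLinearMap

/-!
The relation `B*B + Σ D_j* D_j = I` from `V*V = I` makes the column `(D_j)` a contraction, so by
Cauchy–Schwarz `‖Σ λ_j D_j‖ ≤ |λ| < 1` and `L = L(λ)` is the solution of the fixed-point equation
`L = Σ λ_j (C_j 1 + D_j L) = Σ λ_j v_j`. As `f(λ) = A + B L = 0`, the relations
`B*A + Σ D_j* C_j 1 = 0` and `B*B + Σ D_j* D_j = I` give
`Σ D_j* v_j = -B*A + L - B*B L = L = Σ λ_j v_j`. Finally `v = 0` would force `L = 0`, then
`C = 0` and `A = 0`, against `|A|² + Σ ‖C_j 1‖² = 1`.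
-/

theorem norm_sum_smul_sq_le {𝕜 E ι : Type*} [RCLike 𝕜] [NormedAddCommGroup E] [NormedSpace 𝕜 E]
    (s : Finset ι) (c : ι → 𝕜) (x : ι → E) :
    ‖∑ i ∈ s, c i • x i‖ ^ 2 ≤ (∑ i ∈ s, ‖c i‖ ^ 2) * ∑ i ∈ s, ‖x i‖ ^ 2 := by
  have hnorm : ‖∑ i ∈ s, c i • x i‖ ≤ ∑ i ∈ s, ‖c i‖ * ‖x i‖ :=
    (norm_sum_le _ _).trans_eq (by simp only [norm_smul])
  calc ‖∑ i ∈ s, c i • x i‖ ^ 2 ≤ (∑ i ∈ s, ‖c i‖ * ‖x i‖) ^ 2 := by gcongr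
    _ ≤ _ := Finset.sum_mul_sq_le_sq_mul_sq _ _ _

theorem norm_sum_smul_lt_one {𝕜 E ι : Type*} [RCLike 𝕜] [NormedAddCommGroup E] [NormedSpace 𝕜 E]
    [Fintype ι] {D : ι → E →L[𝕜] E} (hD : ∀ h, ∑ j, ‖D j h‖ ^ 2 ≤ ‖h‖ ^ 2) {c : ι → 𝕜}
    (hc : ∑ j, ‖c j‖ ^ 2 < 1) : ‖∑ j, c j • D j‖ < 1 := by
  set s := ∑ j, ‖c j‖ ^ 2
  have hs : 0 ≤ s := by positivity
  refine lt_of_le_of_lt (opNorm_le_bound _ (Real.sqrt_nonneg s) fun h => ?_) ?_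
  · rw [← Real.sqrt_sq (norm_nonneg h), ← Real.sqrt_mul hs,
      Real.le_sqrt (norm_nonneg _) (by positivity), sum_apply]
    calc ‖∑ j, (c j • D j) h‖ ^ 2 = ‖∑ j, c j • D j h‖ ^ 2 := rfl
      _ ≤ s * ∑ j, ‖D j h‖ ^ 2 := norm_sum_smul_sq_le _ _ _
      _ ≤ s * ‖h‖ ^ 2 := by gcongr; exact hD h
  · rwa [Real.sqrt_lt' one_pos, one_pow]

section Colligation

variable {𝕜 H : Type*} [RCLike 𝕜] [NormedAddCommGroup H] [InnerProductSpace 𝕜 H]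

theorem sum_norm_sq_apply_le {K ι : Type*} [NormedAddCommGroup K] [InnerProductSpace 𝕜 K]
    [CompleteSpace H] [CompleteSpace K] [Fintype ι] {B : H →L[𝕜] K} {D : ι → H →L[𝕜] H}
    (hBD : ∀ h, adjoint B (B h) + ∑ j, adjoint (D j) (D j h) = h) (h : H) :
    ∑ j, ‖D j h‖ ^ 2 ≤ ‖h‖ ^ 2 := by
  have key := congrArg (fun x => RCLike.re (inner 𝕜 x h)) (hBD h)
  simp only [inner_add_left, sum_inner, adjoint_inner_left, map_add, map_sum,
    inner_self_eq_norm_sq] at key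
  linarith [sq_nonneg ‖B h‖]

theorem eq_sum_smul_add_apply {ι : Type*} [Fintype ι] {D : ι → H →L[𝕜] H} {c : ι → 𝕜}
    {x : ι → H} {L : H} (hL : (1 - ∑ j, c j • D j) L = ∑ j, c j • x j) :
    L = ∑ j, c j • (x j + D j L) := by
  rw [sub_apply, one_apply_eq_self, sub_eq_iff_eq_add] at hL
  conv_lhs => rw [hL, sum_apply]
  simp only [smul_add, Finset.sum_add_distrib, smul_apply]

variable [CompleteSpace H] {ι : Type*} [Fintype ι] {A : 𝕜} {B : H →L[𝕜] 𝕜}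
  {C : ι → 𝕜 →L[𝕜] H} {D : ι → H →L[𝕜] H} {L : H}

theorem sum_adjoint_apply_add_eq_self (hBA : adjoint B A + ∑ j, adjoint (D j) (C j 1) = 0)
    (hBD : ∀ h, adjoint B (B h) + ∑ j, adjoint (D j) (D j h) = h) (hL : A + B L = 0) :
    ∑ j, adjoint (D j) (C j 1 + D j L) = L := by
  have hBL : B L = -A := eq_neg_of_add_eq_zero_right hL
  have hBDL := hBD L
  rw [hBL, map_neg] at hBDL
  simp only [map_add, Finset.sum_add_distrib]
  linear_combination (norm := module) hBA + hBDL

theorem apply_one_add_apply_ne_zero (hAC : star A * A + ∑ j, adjoint (C j) (C j 1) = 1)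
    (hL : A + B L = 0) {c : ι → 𝕜} (hLc : L = ∑ j, c j • (C j 1 + D j L)) :
    (fun j => C j 1 + D j L) ≠ 0 := by
  intro hv
  have hv' : ∀ j, C j 1 + D j L = 0 := fun j => congrFun hv j
  have hL0 : L = 0 := by rw [hLc]; simp [hv']
  have hC0 : ∀ j, C j 1 = 0 := fun j => by simpa [hL0] using hv' j
  have hA0 : A = 0 := by simpa [hL0] using hL
  simp [hA0, hC0] at hAC

end Colligation

theorem stmt4_general {H : Type*} [NormedAddCommGroup H] [InnerProductSpace ℂ H] [CompleteSpace H]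
    {d : ℕ} (A : ℂ) (B : H →L[ℂ] ℂ) (C : Fin d → (ℂ →L[ℂ] H)) (D : Fin d → (H →L[ℂ] H))
    -- V*V = I on ℂ ⊕ H
    (h1 : star A * A + ∑ j, adjoint (C j) (C j 1) = 1)
    (h3 : adjoint B A + ∑ j, adjoint (D j) (C j 1) = 0)
    (h4 : ∀ h : H, adjoint B (B h) + ∑ j, adjoint (D j) (D j h) = h)
    (f : (Fin d → ℂ) → ℂ)
    (hf : ∀ z : Fin d → ℂ,
      f z = A + B (Ring.inverse (1 - ∑ j, z j • D j) (∑ j, z j • C j 1)))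
    (lam : Fin d → ℂ) (hlam : ∑ j, ‖lam j‖ ^ 2 < 1) (hzero : f lam = 0) :
    (fun j => C j 1 + D j (Ring.inverse (1 - ∑ i, lam i • D i) (∑ i, lam i • C i 1))) ≠ 0 ∧
      ∑ j, adjoint (D j)
          (C j 1 + D j (Ring.inverse (1 - ∑ i, lam i • D i) (∑ i, lam i • C i 1)))
        = ∑ j, lam j •
          (C j 1 + D j (Ring.inverse (1 - ∑ i, lam i • D i) (∑ i, lam i • C i 1))) := by
  set L := Ring.inverse (1 - ∑ i, lam i • D i) (∑ i, lam i • C i 1) with hLdef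
  have hunit : IsUnit (1 - ∑ j, lam j • D j) :=
    isUnit_one_sub_of_norm_lt_one (norm_sum_smul_lt_one (sum_norm_sq_apply_le h4) hlam)
  have hfixed : L = ∑ j, lam j • (C j 1 + D j L) := eq_sum_smul_add_apply <| by
    rw [hLdef, ← mul_apply_eq_comp, Ring.mul_inverse_cancel _ hunit, one_apply_eq_self]
  have hfL : A + B L = 0 := by rw [← hzero, hf]
  exact ⟨apply_one_add_apply_ne_zero h1 hfL hfixed,
    (sum_adjoint_apply_add_eq_self h3 h4 hfL).trans hfixed⟩

/-- Unit-ball realization: if `f(λ) = 0` for `λ ∈ B_d`, then `λ` is a row eigenvalue of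
`D* = [D_1* … D_d*]`, with row eigenvector `v^λ = C + D L(λ)` where
`L(λ) = (I - Σ λ_j D_j)⁻¹ (Σ λ_j C_j 1)`. -/
theorem stmt4 {H : Type*} [NormedAddCommGroup H] [InnerProductSpace ℂ H] [CompleteSpace H]
    {d : ℕ} (A : ℂ) (B : H →L[ℂ] ℂ) (C : Fin d → (ℂ →L[ℂ] H)) (D : Fin d → (H →L[ℂ] H))
    -- V*V = I on ℂ ⊕ H
    (h1 : star A * A + ∑ j, adjoint (C j) (C j 1) = 1)
    (h2 : ∀ h : H, star A * B h + ∑ j, adjoint (C j) (D j h) = 0)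
    (h3 : adjoint B A + ∑ j, adjoint (D j) (C j 1) = 0)
    (h4 : ∀ h : H, adjoint B (B h) + ∑ j, adjoint (D j) (D j h) = h)
    -- V V* = I on ℂ ⊕ (H ⊗ ℂ^d)
    (h5 : A * star A + B (adjoint B 1) = 1)
    (h6 : ∀ v : Fin d → H, A * ∑ j, adjoint (C j) (v j) + B (∑ j, adjoint (D j) (v j)) = 0)
    (h7 : ∀ k, C k (star A) + D k (adjoint B 1) = 0)
    (h8 : ∀ (v : Fin d → H) (k : Fin d),
      C k (∑ j, adjoint (C j) (v j)) + D k (∑ j, adjoint (D j) (v j)) = v k)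
    (f : (Fin d → ℂ) → ℂ)
    (hf : ∀ z : Fin d → ℂ,
      f z = A + B (Ring.inverse (1 - ∑ j, z j • D j) (∑ j, z j • C j 1)))
    (lam : Fin d → ℂ) (hlam : ∑ j, ‖lam j‖ ^ 2 < 1) (hzero : f lam = 0) :
    (fun j => C j 1 + D j (Ring.inverse (1 - ∑ i, lam i • D i) (∑ i, lam i • C i 1))) ≠ 0 ∧
      ∑ j, adjoint (D j)
          (C j 1 + D j (Ring.inverse (1 - ∑ i, lam i • D i) (∑ i, lam i • C i 1)))
        = ∑ j, lam j •
          (C j 1 + D j (Ring.inverse (1 - ∑ i, lam i • D i) (∑ i, lam i • C i 1))) :=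
  stmt4_general A B C D h1 h3 h4 f hf lam hlam hzero
end

section
/- With the unit-ball realization setup as above, if λ ∈ B_d is a row eigenvalue of the row operator D* = [D_1* … D_d*], then f(λ) = 0. Consequently, the zero set of f in B_d equals the intersection of the set of row eigenvalues of D* with B_d. -/
open ContinuousLinearMap
open scoped InnerProductSpace

/-- Unit-ball realization: zero set of `f` in `B_d` equals row eigenvalues of `D*` in `B_d`.
`D* = [D_1* … D_d*]`, with row eigenvector `v^λ = C + D L(λ)` where
`L(λ) = (I - Σ λ_j D_j)⁻¹ (Σ λ_j C_j 1)`. -/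
theorem stmt5 {H : Type*} [NormedAddCommGroup H] [InnerProductSpace ℂ H] [CompleteSpace H]
    {d : ℕ} (A : ℂ) (B : H →L[ℂ] ℂ) (C : Fin d → (ℂ →L[ℂ] H)) (D : Fin d → (H →L[ℂ] H))
    -- V*V = I on ℂ ⊕ H
    (h1 : star A * A + ∑ j, adjoint (C j) (C j 1) = 1)
    (h2 : ∀ h : H, star A * B h + ∑ j, adjoint (C j) (D j h) = 0)
    (h3 : adjoint B A + ∑ j, adjoint (D j) (C j 1) = 0)
    (h4 : ∀ h : H, adjoint B (B h) + ∑ j, adjoint (D j) (D j h) = h)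
    -- V V* = I on ℂ ⊕ (H ⊗ ℂ^d)
    (h5 : A * star A + B (adjoint B 1) = 1)
    (h6 : ∀ v : Fin d → H, A * ∑ j, adjoint (C j) (v j) + B (∑ j, adjoint (D j) (v j)) = 0)
    (h7 : ∀ k, C k (star A) + D k (adjoint B 1) = 0)
    (h8 : ∀ (v : Fin d → H) (k : Fin d),
      C k (∑ j, adjoint (C j) (v j)) + D k (∑ j, adjoint (D j) (v j)) = v k)
    (f : (Fin d → ℂ) → ℂ)
    (hf : ∀ z : Fin d → ℂ,
      f z = A + B (Ring.inverse (1 - ∑ j, z j • D j) (∑ j, z j • C j 1))) :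
    ∀ lam : Fin d → ℂ, ∑ j, ‖lam j‖ ^ 2 < 1 →
      (f lam = 0 ↔ ∃ v : Fin d → H, v ≠ 0 ∧
        ∑ j, adjoint (D j) (v j) = ∑ j, lam j • v j) := by
  intro lam hlam
  -- Step A: ∑ ‖D j h‖² ≤ ‖h‖²
  have hDsum : ∀ h : H, ∑ j, ‖D j h‖ ^ 2 ≤ ‖h‖ ^ 2 := by
    intro h
    have e : RCLike.re ⟪adjoint B (B h) + ∑ j, adjoint (D j) (D j h), h⟫_ℂ
        = RCLike.re ⟪h, h⟫_ℂ := by rw [h4 h]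
    rw [inner_add_left, sum_inner, map_add, map_sum, adjoint_inner_left,
      inner_self_eq_norm_sq, inner_self_eq_norm_sq] at e
    have e2 : ∀ j : Fin d, RCLike.re ⟪adjoint (D j) (D j h), h⟫_ℂ = ‖D j h‖ ^ 2 := by
      intro j; rw [adjoint_inner_left, inner_self_eq_norm_sq]
    rw [Finset.sum_congr rfl fun j _ => e2 j] at e
    nlinarith [sq_nonneg ‖B h‖]
  set T : H →L[ℂ] H := ∑ j, lam j • D j with hTdef
  set c : H := ∑ j, lam j • C j 1 with hcdef
  have hTapp : ∀ h : H, T h = ∑ j, lam j • D j h := by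
    intro h; simp [hTdef, ContinuousLinearMap.sum_apply]
  -- Step B: ‖T‖ < 1
  have hslam : (0:ℝ) ≤ ∑ j, ‖lam j‖ ^ 2 := Finset.sum_nonneg fun j _ => sq_nonneg _
  set L : ℝ := Real.sqrt (∑ j, ‖lam j‖ ^ 2) with hLdef
  have hL1 : L < 1 := by
    rw [hLdef, show (1:ℝ) = Real.sqrt 1 by simp]
    exact Real.sqrt_lt_sqrt hslam hlam
  have hTnorm : ‖T‖ < 1 := by
    have hb : ∀ h : H, ‖T h‖ ≤ L * ‖h‖ := by
      intro h
      have c1 : ‖T h‖ ≤ ∑ j, ‖lam j‖ * ‖D j h‖ := by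
        rw [hTapp h]
        refine (norm_sum_le _ _).trans (le_of_eq ?_)
        exact Finset.sum_congr rfl fun j _ => norm_smul _ _
      have c2 : (∑ j, ‖lam j‖ * ‖D j h‖) ^ 2 ≤ (∑ j, ‖lam j‖ ^ 2) * ∑ j, ‖D j h‖ ^ 2 :=
        Finset.sum_mul_sq_le_sq_mul_sq _ _ _
      have c3 : (∑ j, ‖lam j‖ * ‖D j h‖) ^ 2 ≤ (∑ j, ‖lam j‖ ^ 2) * ‖h‖ ^ 2 :=
        c2.trans (by exact mul_le_mul_of_nonneg_left (hDsum h) hslam)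
      have c4 : ∑ j, ‖lam j‖ * ‖D j h‖ ≤ L * ‖h‖ := by
        have := Real.sqrt_le_sqrt c3
        rwa [Real.sqrt_sq (Finset.sum_nonneg fun j _ =>
          mul_nonneg (norm_nonneg _) (norm_nonneg _)),
          Real.sqrt_mul hslam, Real.sqrt_sq (norm_nonneg _)] at this
      exact c1.trans c4
    calc ‖T‖ ≤ L := opNorm_le_bound _ (Real.sqrt_nonneg _) hb
    _ < 1 := hL1
  have hu : IsUnit (1 - T) := isUnit_one_sub_of_norm_lt_one hTnorm
  set R : H →L[ℂ] H := Ring.inverse (1 - T) with hRdef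
  have hR1 : ∀ x : H, (1 - T) (R x) = x := by
    intro x
    have : ((1 - T) * R) x = (1 : H →L[ℂ] H) x := by
      rw [Ring.mul_inverse_cancel _ hu]
    simpa [ContinuousLinearMap.mul_apply] using this
  have hR2 : ∀ x : H, R ((1 - T) x) = x := by
    intro x
    have : (R * (1 - T)) x = (1 : H →L[ℂ] H) x := by
      rw [Ring.inverse_mul_cancel _ hu]
    simpa [ContinuousLinearMap.mul_apply] using this
  set g : H := R c with hgdef
  have hfl : f lam = A + B g := hf lam
  have hg : g - T g = c := by
    have := hR1 c
    simpa [ContinuousLinearMap.sub_apply, ContinuousLinearMap.one_apply] using this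
  constructor
  · -- f lam = 0 → eigenvector
    intro hf0
    refine ⟨fun j => C j 1 + D j g, ?_, ?_⟩
    · -- v ≠ 0
      intro hv0
      have hvj : ∀ j, C j 1 + D j g = 0 := fun j => congrFun hv0 j
      have hg0 : g = 0 := by
        have : c + T g = g := by rw [← hg]; abel
        have hc0 : c = ∑ j, lam j • (C j 1 + D j g) - T g := by
          rw [hcdef, hTapp, ← Finset.sum_sub_distrib]
          exact Finset.sum_congr rfl fun j _ => by rw [smul_add]; abel
        have : g - T g = ∑ j, lam j • (C j 1 + D j g) - T g := by rw [hg, hc0]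
        have hgsum : g = ∑ j, lam j • (C j 1 + D j g) := by
          have := congrArg (· + T g) this; simpa [sub_add_cancel] using this
        rw [hgsum]
        simp [hvj]
      have hCj0 : ∀ j, C j 1 = (0 : H) := by
        intro j; have := hvj j; rwa [hg0, map_zero, add_zero] at this
      have hA0 : A = 0 := by
        have : B g = 0 := by rw [hg0, map_zero]
        rw [hfl, this, add_zero] at hf0; exact hf0
      rw [hA0] at h1
      simp [hCj0] at h1
    · -- eigen equation
      have eL : ∑ j, adjoint (D j) (C j 1 + D j g)
          = (∑ j, adjoint (D j) (C j 1)) + ∑ j, adjoint (D j) (D j g) := by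
        rw [← Finset.sum_add_distrib]
        exact Finset.sum_congr rfl fun j _ => map_add _ _ _
      have e3 : ∑ j, adjoint (D j) (C j 1) = -(adjoint B A) :=
        eq_neg_of_add_eq_zero_right h3
      have e4 : ∑ j, adjoint (D j) (D j g) = g - adjoint B (B g) :=
        eq_sub_of_add_eq' (h4 g)
      have e5 : adjoint B A + adjoint B (B g) = 0 := by
        rw [← map_add, show A + B g = 0 from by rw [← hfl]; exact hf0, map_zero]
      have eR : ∑ j, lam j • (C j 1 + D j g) = c + T g := by
        rw [hcdef, hTapp, ← Finset.sum_add_distrib]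
        exact Finset.sum_congr rfl fun j _ => smul_add _ _ _
      have hcg : c + T g = g := by rw [← hg]; abel
      rw [eL, e3, e4, eR, hcg]
      calc -(adjoint B A) + (g - adjoint B (B g))
          = g - (adjoint B A + adjoint B (B g)) := by abel
        _ = g := by rw [e5, sub_zero]
  · -- eigenvector → f lam = 0
    rintro ⟨v, hv, hev⟩
    set s : ℂ := ∑ j, adjoint (C j) (v j) with hsdef
    set u : H := ∑ j, lam j • v j with hudef
    have h6v : A * s + B u = 0 := by
      have t : A * s + B (∑ j, adjoint (D j) (v j)) = 0 := h6 v
      rwa [hev] at t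
    have h8v : ∀ k, s • C k 1 + D k u = v k := by
      intro k
      have t : C k s + D k (∑ j, adjoint (D j) (v j)) = v k := h8 v k
      rw [hev] at t
      rwa [show C k s = s • C k 1 by rw [← map_smul, smul_eq_mul, mul_one]] at t
    have hueq : u - T u = s • c := by
      have : u = ∑ k, lam k • (s • C k 1 + D k u) := by
        rw [hudef]; exact Finset.sum_congr rfl fun k _ => by rw [h8v k]
      rw [hTapp]
      calc u - ∑ j, lam j • D j u
          = (∑ k, lam k • (s • C k 1 + D k u)) - ∑ j, lam j • D j u := by rw [← this]
        _ = ∑ k, (lam k • (s • C k 1 + D k u) - lam k • D k u) := by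
            rw [Finset.sum_sub_distrib]
        _ = ∑ k, s • lam k • C k 1 := by
            refine Finset.sum_congr rfl fun k _ => ?_
            rw [smul_add]; rw [smul_comm]; abel
        _ = s • c := by rw [hcdef, Finset.smul_sum]
    have husg : u = s • g := by
      have : R (u - T u) = R (s • c) := by rw [hueq]
      rw [show u - T u = (1 - T) u by
        simp [ContinuousLinearMap.sub_apply, ContinuousLinearMap.one_apply]] at this
      rw [hR2, map_smul] at this
      rw [this, hgdef]
    have hs0 : s ≠ 0 := by
      intro hs
      have hu0 : u = 0 := by
        rw [husg, hs, zero_smul]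
      have : ∀ k, v k = 0 := by
        intro k
        simp [← h8v k, hs, hu0]
      exact hv (funext this)
    have : s * f lam = 0 := by
      rw [hfl, mul_add]
      have : B u = s * B g := by rw [husg, map_smul, smul_eq_mul]
      linear_combination h6v - this + mul_comm s A
    rcases mul_eq_zero.mp this with h | h
    · exact absurd h hs0
    · exact h
end

section
/- Let H = H_1 ⊕ … ⊕ H_d be a direct sum of Hilbert spaces with orthogonal projections P_j onto H_j, and let Δ(z) := Σ_j z_j P_j for z ∈ C^d. Let f(z) = A + B Δ(z)(I - D Δ(z))^{-1} C for z ∈ D^d, where V = [[A,B],[C,D]] : C ⊕ H → C ⊕ H is unitary. If λ ∈ D^d satisfies f(λ) = 0, then there exists a nonzero vector v ∈ H with D* v = Δ(λ) v; in fact v = (I - D Δ(λ))^{-1} C works and satisfies C* v = 1. -/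
open ContinuousLinearMap
open scoped ComplexInnerProductSpace NNReal

set_option maxHeartbeats 1000000 in
/-- Polydisk realization: if `f(λ) = 0` for `λ ∈ 𝔻^d`, then
`v = (I - DΔ(λ))⁻¹ C 1` is a nonzero vector with `D* v = Δ(λ) v` and `C* v = 1`. -/
theorem stmt6 {H : Type*} [NormedAddCommGroup H] [InnerProductSpace ℂ H] [CompleteSpace H]
    {d : ℕ} (P : Fin d → (H →L[ℂ] H))
    (hPsa : ∀ j, IsSelfAdjoint (P j))
    (hPidem : ∀ j, P j ∘L P j = P j)
    (hPorth : ∀ i j, i ≠ j → P i ∘L P j = 0)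
    (hPsum : ∑ j, P j = 1)
    (A : ℂ) (B : H →L[ℂ] ℂ) (C : ℂ →L[ℂ] H) (D : H →L[ℂ] H)
    -- V*V = I on ℂ ⊕ H
    (h1 : star A * A + adjoint C (C 1) = 1)
    (h2 : ∀ h : H, star A * B h + adjoint C (D h) = 0)
    (h3 : adjoint B A + adjoint D (C 1) = 0)
    (h4 : ∀ h : H, adjoint B (B h) + adjoint D (D h) = h)
    -- V V* = I on ℂ ⊕ H
    (h5 : A * star A + B (adjoint B 1) = 1)
    (h6 : ∀ v : H, A * adjoint C v + B (adjoint D v) = 0)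
    (h7 : C (star A) + D (adjoint B 1) = 0)
    (h8 : ∀ v : H, C (adjoint C v) + D (adjoint D v) = v)
    (f : (Fin d → ℂ) → ℂ)
    (hf : ∀ z : Fin d → ℂ,
      f z = A + B ((∑ j, z j • P j)
        (Ring.inverse (1 - D ∘L (∑ j, z j • P j)) (C 1))))
    (lam : Fin d → ℂ) (hlam : ∀ j, ‖lam j‖ < 1) (hzero : f lam = 0) :
    Ring.inverse (1 - D ∘L (∑ j, lam j • P j)) (C 1) ≠ 0 ∧
      adjoint D (Ring.inverse (1 - D ∘L (∑ j, lam j • P j)) (C 1))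
        = (∑ j, lam j • P j) (Ring.inverse (1 - D ∘L (∑ j, lam j • P j)) (C 1)) ∧
      adjoint C (Ring.inverse (1 - D ∘L (∑ j, lam j • P j)) (C 1)) = 1 := by
  classical
  set Δ : H →L[ℂ] H := ∑ j, lam j • P j with hΔ
  have hΔapp : ∀ x : H, Δ x = ∑ j, lam j • P j x := by
    intro x
    rw [hΔ]
    simp [ContinuousLinearMap.sum_apply]
  -- self-adjointness of the projections, in inner-product form
  have hadj : ∀ i, adjoint (P i) = P i := fun i => by
    rw [← ContinuousLinearMap.star_eq_adjoint]; exact hPsa i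
  have hip : ∀ (i : Fin d) (x z : H), ⟪P i x, z⟫ = ⟪x, P i z⟫ := by
    intro i x z
    conv_lhs => rw [← hadj i]
    exact adjoint_inner_left _ _ _
  -- ⟪P j x, P j x⟫ = ⟪x, P j x⟫
  have hipp : ∀ (j : Fin d) (x : H), ⟪P j x, P j x⟫ = ⟪x, P j x⟫ := by
    intro j x
    rw [hip]
    congr 1
    have := ContinuousLinearMap.ext_iff.mp (hPidem j) x
    simpa using this
  -- ∑_j ‖P_j x‖² = ‖x‖²
  have hxsum : ∀ x : H, ∑ j, ‖P j x‖ ^ 2 = ‖x‖ ^ 2 := by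
    intro x
    have e : ∑ j, ⟪P j x, P j x⟫ = ⟪x, x⟫ := by
      calc ∑ j, ⟪P j x, P j x⟫ = ∑ j, ⟪x, P j x⟫ :=
            Finset.sum_congr rfl fun j _ => hipp j x
        _ = ⟪x, (∑ j, P j) x⟫ := by rw [ContinuousLinearMap.sum_apply, inner_sum]
        _ = ⟪x, x⟫ := by rw [hPsum]; simp
    simp only [inner_self_eq_norm_sq_to_K] at e
    exact_mod_cast e
  -- the norm bound on Δ
  set c : ℝ≥0 := Finset.univ.sup fun j => ‖lam j‖₊ with hc
  have hc1 : (c : ℝ) < 1 := by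
    have : c < 1 := by
      rw [hc, Finset.sup_lt_iff (by norm_num : (⊥ : ℝ≥0) < 1)]
      intro j _
      exact_mod_cast hlam j
    exact_mod_cast this
  have hcj : ∀ j, ‖lam j‖ ≤ (c : ℝ) := fun j => by
    exact_mod_cast (Finset.le_sup (f := fun j => ‖lam j‖₊) (Finset.mem_univ j))
  have hΔnorm : ∀ x : H, ‖Δ x‖ ≤ (c : ℝ) * ‖x‖ := by
    intro x
    have e : ⟪Δ x, Δ x⟫ = ∑ j, ((‖lam j‖ : ℂ)) ^ 2 * ⟪P j x, P j x⟫ := by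
      calc ⟪Δ x, Δ x⟫ = ∑ i, ∑ j, ⟪lam i • P i x, lam j • P j x⟫ := by
            rw [hΔapp x, sum_inner]
            exact Finset.sum_congr rfl fun i _ => inner_sum _ _ _
        _ = ∑ j, ((‖lam j‖ : ℂ)) ^ 2 * ⟪P j x, P j x⟫ := by
            refine Finset.sum_congr rfl fun i _ => ?_
            rw [Finset.sum_eq_single i]
            · rw [inner_smul_left, inner_smul_right, ← mul_assoc]
              congr 1
              exact_mod_cast RCLike.conj_mul (lam i)
            · intro j _ hj
              have h0 : ⟪P i x, P j x⟫ = 0 := by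
                rw [hip]
                have := ContinuousLinearMap.ext_iff.mp (hPorth i j (Ne.symm hj)) x
                simp only [ContinuousLinearMap.comp_apply] at this
                rw [this]
                simp
              rw [inner_smul_left, inner_smul_right, h0]
              ring
            · simp
    have ereal : ‖Δ x‖ ^ 2 = ∑ j, ‖lam j‖ ^ 2 * ‖P j x‖ ^ 2 := by
      simp only [inner_self_eq_norm_sq_to_K] at e
      have : ((‖Δ x‖ ^ 2 : ℝ) : ℂ) = ((∑ j, ‖lam j‖ ^ 2 * ‖P j x‖ ^ 2 : ℝ) : ℂ) := by
        push_cast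
        exact e
      exact_mod_cast this
    have hsq : ‖Δ x‖ ^ 2 ≤ ((c : ℝ) * ‖x‖) ^ 2 := by
      rw [ereal, mul_pow, ← hxsum x, Finset.mul_sum]
      refine Finset.sum_le_sum fun j _ => ?_
      have := hcj j
      have h1' : ‖lam j‖ ^ 2 ≤ (c : ℝ) ^ 2 :=
        pow_le_pow_left₀ (norm_nonneg _) this 2
      exact mul_le_mul_of_nonneg_right h1' (by positivity)
    have h0 : (0 : ℝ) ≤ (c : ℝ) * ‖x‖ := by positivity
    exact le_of_pow_le_pow_left₀ two_ne_zero h0 hsq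
  -- D is a contraction
  have hDcon : ∀ h : H, ‖D h‖ ≤ ‖h‖ := by
    intro h
    have e : ⟪h, adjoint B (B h) + adjoint D (D h)⟫ = ⟪h, h⟫ := by rw [h4 h]
    rw [inner_add_right, adjoint_inner_right, adjoint_inner_right] at e
    simp only [inner_self_eq_norm_sq_to_K] at e
    have er : ‖B h‖ ^ 2 + ‖D h‖ ^ 2 = ‖h‖ ^ 2 := by exact_mod_cast e
    have : ‖D h‖ ^ 2 ≤ ‖h‖ ^ 2 := by nlinarith [sq_nonneg ‖B h‖]
    exact le_of_pow_le_pow_left₀ two_ne_zero (norm_nonneg _) this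
  -- invertibility of 1 - DΔ
  have hDΔ : ‖D ∘L Δ‖ < 1 := by
    have hle : ‖D ∘L Δ‖ ≤ (c : ℝ) :=
      opNorm_le_bound _ c.coe_nonneg fun x => by
        calc ‖(D ∘L Δ) x‖ = ‖D (Δ x)‖ := rfl
          _ ≤ ‖Δ x‖ := hDcon _
          _ ≤ (c : ℝ) * ‖x‖ := hΔnorm x
    exact lt_of_le_of_lt hle hc1
  have hu : IsUnit (1 - D ∘L Δ) := (Units.oneSub _ hDΔ).isUnit
  set v : H := Ring.inverse (1 - D ∘L Δ) (C 1) with hv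
  have hinv : (1 - D ∘L Δ) * Ring.inverse (1 - D ∘L Δ) = 1 :=
    Ring.mul_inverse_cancel _ hu
  have hveq : v = C 1 + D (Δ v) := by
    have h := ContinuousLinearMap.ext_iff.mp hinv (C 1)
    simp only [ContinuousLinearMap.mul_apply, ContinuousLinearMap.sub_apply,
      ContinuousLinearMap.one_apply, ContinuousLinearMap.comp_apply] at h
    rw [← hv] at h
    exact sub_eq_iff_eq_add.mp h
  -- f(λ) = 0 unpacked
  have hA0 : A + B (Δ v) = 0 := by
    rw [hf lam] at hzero
    rw [← hΔ, ← hv] at hzero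
    exact hzero
  -- C* v = 1
  have hC : adjoint C v = 1 := by
    have e : adjoint C v = adjoint C (C 1) + adjoint C (D (Δ v)) := by
      conv_lhs => rw [hveq]
      rw [map_add]
    linear_combination e + h1 + h2 (Δ v) - star A * hA0
  -- D* v = Δ v
  have hD : adjoint D v = Δ v := by
    have e : adjoint D v = adjoint D (C 1) + adjoint D (D (Δ v)) := by
      conv_lhs => rw [hveq]
      rw [map_add]
    have e3 : adjoint D (C 1) = -adjoint B A := by
      have h := h3
      rwa [add_comm, add_eq_zero_iff_eq_neg] at h
    have e4 : adjoint D (D (Δ v)) = Δ v - adjoint B (B (Δ v)) :=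
      eq_sub_of_add_eq' (h4 (Δ v))
    have e7 : adjoint B A + adjoint B (B (Δ v)) = 0 := by
      rw [← map_add, hA0, map_zero]
    rw [e, e3, e4]
    have heq : -adjoint B A + (Δ v - adjoint B (B (Δ v)))
        = Δ v - (adjoint B A + adjoint B (B (Δ v))) := by abel
    rw [heq, e7, sub_zero]
  refine ⟨?_, hD, hC⟩
  intro h0
  rw [h0, map_zero] at hC
  exact one_ne_zero hC.symm
end

section
/- With the polydisk realization setup as above, if λ ∈ D^d is a diagonal eigenvalue of D* (i.e., D* v = Δ(λ) v for some nonzero v ∈ H), then f(λ) = 0. Hence the zero set of f in D^d equals { λ ∈ D^d : λ is a diagonal eigenvalue of D* }. -/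
/-!
Fix `λ` in the open polydisk and write `Δ = Δ(λ)`. Then `‖Δ‖ < 1` and `‖D‖ ≤ 1`, so
`w = (1 - DΔ)⁻¹ C 1` is the unique solution of `w = C 1 + D Δ w`, and `V (1, Δw) = (f λ, w)`.
If `f λ = 0`, then `V*V = 1` turns this into `D* w = Δ w`, and `w ≠ 0` because the first column
`(A, C 1)` of `V` is a unit vector. Conversely, if `D* v = Δ v` with `v ≠ 0`, then `VV* = 1` gives
`v = (C* v) C 1 + D Δ v`; here `C* v ≠ 0` because `DΔ` is a strict contraction, so
`w = v / C* v`, and `f λ = A + B D* v / C* v = 0` by the off-diagonal entry of `VV* = 1`.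
-/

open ContinuousLinearMap

section Pythagoras

variable {𝕜 E : Type*} [RCLike 𝕜] [NormedAddCommGroup E] [InnerProductSpace 𝕜 E]

theorem norm_sum_sq_of_pairwise_inner_eq_zero {ι : Type*} [Fintype ι] {v : ι → E}
    (hv : Pairwise fun i j => inner 𝕜 (v i) (v j) = 0) :
    ‖∑ i, v i‖ ^ 2 = ∑ i, ‖v i‖ ^ 2 := by
  have h : ((‖∑ i, v i‖ : ℝ) : 𝕜) ^ 2 = ∑ i, ((‖v i‖ : ℝ) : 𝕜) ^ 2 := by
    simp only [← inner_self_eq_norm_sq_to_K, sum_inner, inner_sum]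
    refine Finset.sum_congr rfl fun i _ => Finset.sum_eq_single i (fun j _ hji => hv hji) ?_
    simp
  exact_mod_cast h

end Pythagoras

section OrthogonalDecomposition

variable {𝕜 H ι : Type*} [RCLike 𝕜] [NormedAddCommGroup H] [InnerProductSpace 𝕜 H]
  [CompleteSpace H] {P : ι → H →L[𝕜] H}

theorem inner_apply_apply_eq_zero (hPsa : ∀ j, IsSelfAdjoint (P j))
    (hPorth : ∀ i j, i ≠ j → P i ∘L P j = 0) {i j : ι} (hij : i ≠ j) (x y : H) :
    inner 𝕜 (P i x) (P j y) = 0 := by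
  rw [← adjoint_inner_right, (hPsa i).adjoint_eq, ← comp_apply, hPorth i j hij, zero_apply,
    inner_zero_right]

variable [Fintype ι]

theorem norm_sum_smul_apply_sq (hPsa : ∀ j, IsSelfAdjoint (P j))
    (hPorth : ∀ i j, i ≠ j → P i ∘L P j = 0) (c : ι → 𝕜) (x : H) :
    ‖(∑ j, c j • P j) x‖ ^ 2 = ∑ j, ‖c j‖ ^ 2 * ‖P j x‖ ^ 2 := by
  rw [sum_apply, norm_sum_sq_of_pairwise_inner_eq_zero (𝕜 := 𝕜)]
  · simp only [smul_apply, norm_smul, mul_pow]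
  · intro i j hij
    simp only [smul_apply, inner_smul_left, inner_smul_right,
      inner_apply_apply_eq_zero hPsa hPorth hij, mul_zero]

theorem norm_sq_eq_sum_norm_apply_sq (hPsa : ∀ j, IsSelfAdjoint (P j))
    (hPorth : ∀ i j, i ≠ j → P i ∘L P j = 0) (hPsum : ∑ j, P j = 1) (x : H) :
    ‖x‖ ^ 2 = ∑ j, ‖P j x‖ ^ 2 := by
  simpa [hPsum] using norm_sum_smul_apply_sq hPsa hPorth (fun _ => 1) x

theorem norm_sum_smul_le (hPsa : ∀ j, IsSelfAdjoint (P j))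
    (hPorth : ∀ i j, i ≠ j → P i ∘L P j = 0) (hPsum : ∑ j, P j = 1) {c : ι → 𝕜} {r : ℝ}
    (hr : 0 ≤ r) (hcr : ∀ j, ‖c j‖ ≤ r) : ‖∑ j, c j • P j‖ ≤ r := by
  refine opNorm_le_bound _ hr fun x => le_of_pow_le_pow_left₀ two_ne_zero (by positivity) ?_
  calc ‖(∑ j, c j • P j) x‖ ^ 2 = ∑ j, ‖c j‖ ^ 2 * ‖P j x‖ ^ 2 :=
        norm_sum_smul_apply_sq hPsa hPorth c x
    _ ≤ ∑ j, r ^ 2 * ‖P j x‖ ^ 2 := by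
        gcongr with j
        exact hcr j
    _ = (r * ‖x‖) ^ 2 := by
        rw [mul_pow, norm_sq_eq_sum_norm_apply_sq hPsa hPorth hPsum, Finset.mul_sum]

theorem norm_sum_smul_lt_one_s7 (hPsa : ∀ j, IsSelfAdjoint (P j))
    (hPorth : ∀ i j, i ≠ j → P i ∘L P j = 0) (hPsum : ∑ j, P j = 1) {c : ι → 𝕜}
    (hc : ∀ j, ‖c j‖ < 1) : ‖∑ j, c j • P j‖ < 1 := by
  set r : NNReal := Finset.univ.sup fun j => ‖c j‖₊
  have hr : r < 1 := (Finset.sup_lt_iff one_pos).2 fun j _ => by exact_mod_cast hc j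
  have hcr : ∀ j, ‖c j‖ ≤ r := fun j => by
    exact_mod_cast Finset.le_sup (f := fun j => ‖c j‖₊) (Finset.mem_univ j)
  exact (norm_sum_smul_le hPsa hPorth hPsum r.2 hcr).trans_lt hr

end OrthogonalDecomposition

section Colligation

variable {𝕜 E : Type*} [RCLike 𝕜] [NormedAddCommGroup E] [InnerProductSpace 𝕜 E]

theorem eq_add_apply_iff_eq_ring_inverse {D Δ : E →L[𝕜] E} (hT : IsUnit (1 - D ∘L Δ))
    (y w : E) : w = y + D (Δ w) ↔ w = Ring.inverse (1 - D ∘L Δ) y := by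
  obtain ⟨T, hT⟩ := hT
  have hTw : w = y + D (Δ w) ↔ (T : E →L[𝕜] E) w = y := by
    rw [hT, sub_apply, one_apply_eq_self, comp_apply, sub_eq_iff_eq_add]
  rw [hTw, ← hT, Ring.inverse_unit]
  constructor
  · rintro rfl
    rw [← mul_apply_eq_comp, Units.inv_mul, one_apply_eq_self]
  · rintro rfl
    rw [← mul_apply_eq_comp, Units.mul_inv, one_apply_eq_self]

variable [CompleteSpace E] {F : Type*} [NormedAddCommGroup F] [InnerProductSpace 𝕜 F]
  [CompleteSpace F]

theorem opNorm_le_one_of_adjoint_apply_add_adjoint_apply {B : E →L[𝕜] F} {D : E →L[𝕜] E}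
    (h : ∀ x, adjoint B (B x) + adjoint D (D x) = x) : ‖D‖ ≤ 1 := by
  refine opNorm_le_bound _ zero_le_one fun x => ?_
  have hx : ‖x‖ ^ 2 = ‖B x‖ ^ 2 + ‖D x‖ ^ 2 := by
    rw [← inner_self_eq_norm_sq (𝕜 := 𝕜) x]
    nth_rewrite 2 [← h x]
    rw [inner_add_right, adjoint_inner_right, adjoint_inner_right, map_add,
      inner_self_eq_norm_sq, inner_self_eq_norm_sq]
  rw [one_mul]
  exact le_of_pow_le_pow_left₀ two_ne_zero (norm_nonneg x) (by nlinarith [sq_nonneg ‖B x‖])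

end Colligation

section Realization

variable {𝕜 H : Type*} [RCLike 𝕜] [NormedAddCommGroup H] [InnerProductSpace 𝕜 H]
  [CompleteSpace H] {A : 𝕜} {B : H →L[𝕜] 𝕜} {C : 𝕜 →L[𝕜] H} {D : H →L[𝕜] H}

theorem adjoint_apply_eq_of_add_apply_eq_zero (h3 : adjoint B A + adjoint D (C 1) = 0)
    (h4 : ∀ h : H, adjoint B (B h) + adjoint D (D h) = h) {w x : H} (hw : w = C 1 + D x)
    (hx : A + B x = 0) : adjoint D w = x := by
  have hBx : adjoint B A + adjoint B (B x) = 0 := by rw [← map_add, hx, map_zero]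
  rw [hw, map_add]
  linear_combination (norm := module) h4 x + h3 - hBx

theorem ne_zero_of_add_apply_eq_zero (h1 : star A * A + adjoint C (C 1) = 1) {Δ : H →L[𝕜] H}
    {w : H} (hw : w = C 1 + D (Δ w)) (hf : A + B (Δ w) = 0) : w ≠ 0 := by
  rintro rfl
  simp only [map_zero, add_zero] at hw hf
  rw [← hw, hf] at h1
  simp at h1

theorem adjoint_apply_ne_zero_of_adjoint_apply_eq
    (h8 : ∀ v : H, C (adjoint C v) + D (adjoint D v) = v) {Δ : H →L[𝕜] H} (hD : ‖D‖ ≤ 1)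
    (hΔ : ‖Δ‖ < 1) {v : H} (hv0 : v ≠ 0) (hv : adjoint D v = Δ v) : adjoint C v ≠ 0 := by
  intro hCv
  have hv' : D (Δ v) = v := by simpa [hCv, hv] using h8 v
  refine lt_irrefl ‖v‖ ?_
  calc ‖v‖ = ‖D (Δ v)‖ := by rw [hv']
    _ ≤ ‖Δ v‖ := by simpa using D.le_of_opNorm_le hD (Δ v)
    _ < ‖v‖ := (Δ.le_opNorm v).trans_lt (mul_lt_of_lt_one_left (norm_pos_iff.2 hv0) hΔ)

theorem inv_smul_eq_add_apply (h8 : ∀ v : H, C (adjoint C v) + D (adjoint D v) = v)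
    {Δ : H →L[𝕜] H} {v : H} (hv : adjoint D v = Δ v) (hu : adjoint C v ≠ 0) :
    (adjoint C v)⁻¹ • v = C 1 + D (Δ ((adjoint C v)⁻¹ • v)) := by
  set u := adjoint C v
  have hCu : C u = u • C 1 := by rw [← map_smul, smul_eq_mul, mul_one]
  have hv' : v = u • C 1 + D (Δ v) := by
    rw [← hCu, ← hv]
    exact (h8 v).symm
  conv_lhs => rw [hv']
  rw [map_smul, map_smul, smul_add, inv_smul_smul₀ hu]

theorem add_apply_inv_smul_eq_zero (h6 : ∀ v : H, A * adjoint C v + B (adjoint D v) = 0)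
    {Δ : H →L[𝕜] H} {v : H} (hv : adjoint D v = Δ v) (hu : adjoint C v ≠ 0) :
    A + B (Δ ((adjoint C v)⁻¹ • v)) = 0 := by
  rw [map_smul, map_smul, ← hv, smul_eq_mul, eq_neg_of_add_eq_zero_right (h6 v)]
  field_simp
  ring

end Realization

theorem stmt7_general {H : Type*} [NormedAddCommGroup H] [InnerProductSpace ℂ H] [CompleteSpace H]
    {d : ℕ} (P : Fin d → (H →L[ℂ] H))
    (hPsa : ∀ j, IsSelfAdjoint (P j))
    (hPorth : ∀ i j, i ≠ j → P i ∘L P j = 0)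
    (hPsum : ∑ j, P j = 1)
    (A : ℂ) (B : H →L[ℂ] ℂ) (C : ℂ →L[ℂ] H) (D : H →L[ℂ] H)
    -- V*V = I on ℂ ⊕ H
    (h1 : star A * A + adjoint C (C 1) = 1)
    (h3 : adjoint B A + adjoint D (C 1) = 0)
    (h4 : ∀ h : H, adjoint B (B h) + adjoint D (D h) = h)
    -- V V* = I on ℂ ⊕ H
    (h6 : ∀ v : H, A * adjoint C v + B (adjoint D v) = 0)
    (h8 : ∀ v : H, C (adjoint C v) + D (adjoint D v) = v)
    (f : (Fin d → ℂ) → ℂ)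
    (hf : ∀ z : Fin d → ℂ,
      f z = A + B ((∑ j, z j • P j)
        (Ring.inverse (1 - D ∘L (∑ j, z j • P j)) (C 1))))
    :
    ∀ lam : Fin d → ℂ, (∀ j, ‖lam j‖ < 1) →
      (f lam = 0 ↔ ∃ v : H, v ≠ 0 ∧ adjoint D v = (∑ j, lam j • P j) v) := by
  intro lam hlam
  set Δ := ∑ j, lam j • P j
  have hΔ : ‖Δ‖ < 1 := norm_sum_smul_lt_one_s7 hPsa hPorth hPsum hlam
  have hD : ‖D‖ ≤ 1 := opNorm_le_one_of_adjoint_apply_add_adjoint_apply h4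
  have hT : IsUnit (1 - D ∘L Δ) := isUnit_one_sub_of_norm_lt_one <|
    (opNorm_comp_le D Δ).trans_lt (mul_lt_one_of_nonneg_of_lt_one_right hD (norm_nonneg Δ) hΔ)
  set w := Ring.inverse (1 - D ∘L Δ) (C 1)
  have hw : w = C 1 + D (Δ w) := (eq_add_apply_iff_eq_ring_inverse hT _ _).2 rfl
  rw [hf lam]
  constructor
  · intro hf0
    exact ⟨w, ne_zero_of_add_apply_eq_zero h1 hw hf0,
      adjoint_apply_eq_of_add_apply_eq_zero h3 h4 hw hf0⟩
  · rintro ⟨v, hv0, hv⟩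
    have hu := adjoint_apply_ne_zero_of_adjoint_apply_eq h8 hD hΔ hv0 hv
    rw [← (eq_add_apply_iff_eq_ring_inverse hT _ _).1 (inv_smul_eq_add_apply h8 hv hu)]
    exact add_apply_inv_smul_eq_zero h6 hv hu

/-- Polydisk realization: the zero set of `f` in `𝔻^d` equals the set of diagonal
eigenvalues of `D*` in `𝔻^d`. -/
theorem stmt7 {H : Type*} [NormedAddCommGroup H] [InnerProductSpace ℂ H] [CompleteSpace H]
    {d : ℕ} (P : Fin d → (H →L[ℂ] H))
    (hPsa : ∀ j, IsSelfAdjoint (P j))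
    (hPidem : ∀ j, P j ∘L P j = P j)
    (hPorth : ∀ i j, i ≠ j → P i ∘L P j = 0)
    (hPsum : ∑ j, P j = 1)
    (A : ℂ) (B : H →L[ℂ] ℂ) (C : ℂ →L[ℂ] H) (D : H →L[ℂ] H)
    -- V*V = I on ℂ ⊕ H
    (h1 : star A * A + adjoint C (C 1) = 1)
    (h2 : ∀ h : H, star A * B h + adjoint C (D h) = 0)
    (h3 : adjoint B A + adjoint D (C 1) = 0)
    (h4 : ∀ h : H, adjoint B (B h) + adjoint D (D h) = h)
    -- V V* = I on ℂ ⊕ H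
    (h5 : A * star A + B (adjoint B 1) = 1)
    (h6 : ∀ v : H, A * adjoint C v + B (adjoint D v) = 0)
    (h7 : C (star A) + D (adjoint B 1) = 0)
    (h8 : ∀ v : H, C (adjoint C v) + D (adjoint D v) = v)
    (f : (Fin d → ℂ) → ℂ)
    (hf : ∀ z : Fin d → ℂ,
      f z = A + B ((∑ j, z j • P j)
        (Ring.inverse (1 - D ∘L (∑ j, z j • P j)) (C 1))))
    :
    ∀ lam : Fin d → ℂ, (∀ j, ‖lam j‖ < 1) →
      (f lam = 0 ↔ ∃ v : H, v ≠ 0 ∧ adjoint D v = (∑ j, lam j • P j) v) :=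
  stmt7_general P hPsa hPorth hPsum A B C D h1 h3 h4 h6 h8 f hf
end

section
/- Let f : D_Q → C be given by the realization f(z) = A + B[I - (Q(z) ⊗ I_H)D]^{-1}(Q(z) ⊗ I_H)C, where Q(z) = Σ_j z_j Q_j is an s×r matrix of linear polynomials, D_Q = { z ∈ C^d : ‖Q(z)‖ < 1 }, and V = [[A,B],[C,D]] : C ⊕ (C^s ⊗ H) → C ⊕ (C^r ⊗ H) is unitary. Then for λ ∈ D_Q, f(λ) = 0 if and only if there exists a nonzero vector v ∈ C^r ⊗ H with D* v = (Q(λ) ⊗ I_H) v. -/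
set_option synthInstance.maxHeartbeats 1000000
set_option maxHeartbeats 2000000
open ContinuousLinearMap

/-!
Write `T = Q(λ)D` and `u = (1 - T)⁻¹ Q(λ) C 1`, so that `u = Q(λ)(C 1 + D u)` and
`f(λ) = A + B u`. Since `B*B + D*D = I`, `D` is a contraction, so `1 - T` is invertible on `𝔻_Q`.

If `f(λ) = 0`, then `v = C 1 + D u` works: `B*A + D*C = 0` and `B*B + D*D = I` give
`D* v = u - B*(A + B u) = u = Q(λ) v`, and `v ≠ 0` because `|A|² + ‖C 1‖² = 1`.
Conversely, if `D* v = Q(λ) v` with `v ≠ 0`, put `α = C* v`. From `C C* + D D* = I`,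
`v = α C 1 + D Q(λ) v`, so `Q(λ) v` solves the equation defining `α u`, hence equals it, and
`α ≠ 0`. Finally `A C* + B D* = 0` applied to `v` reads `α (A + B u) = 0`.
-/

instance PiLp.instCompleteSpace' (p : ENNReal) {ι : Type*} (β : ι → Type*)
    [∀ i, UniformSpace (β i)] [∀ i, CompleteSpace (β i)] :
    CompleteSpace (PiLp p β) :=
  (PiLp.uniformEquiv p β).completeSpace_iff.2 inferInstance

theorem ContinuousLinearMap.isUnit_one_sub_comp {𝕜 E F : Type*} [NontriviallyNormedField 𝕜]
    [NormedAddCommGroup E] [NormedSpace 𝕜 E] [CompleteSpace E]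
    [NormedAddCommGroup F] [NormedSpace 𝕜 F] {Q : F →L[𝕜] E} {D : E →L[𝕜] F}
    (hQ : ‖Q‖ < 1) (hD : ‖D‖ ≤ 1) : IsUnit (1 - Q ∘L D) :=
  ⟨Units.oneSub (Q ∘L D) ((opNorm_comp_le Q D).trans_lt <|
    (mul_le_of_le_one_right (norm_nonneg Q) hD).trans_lt hQ), rfl⟩

section Realization

variable {𝕜 E F G : Type*} [RCLike 𝕜]
  [NormedAddCommGroup E] [InnerProductSpace 𝕜 E] [CompleteSpace E]
  [NormedAddCommGroup F] [InnerProductSpace 𝕜 F] [CompleteSpace F]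
  [NormedAddCommGroup G] [InnerProductSpace 𝕜 G] [CompleteSpace G]

theorem ContinuousLinearMap.norm_le_one_of_adjoint_apply_add_adjoint_apply
    (B : E →L[𝕜] G) (D : E →L[𝕜] F) (h : ∀ x, adjoint B (B x) + adjoint D (D x) = x) :
    ‖D‖ ≤ 1 := by
  refine opNorm_le_bound D zero_le_one fun x => ?_
  have hpyth : ‖B x‖ ^ 2 + ‖D x‖ ^ 2 = ‖x‖ ^ 2 := by
    rw [apply_norm_sq_eq_inner_adjoint_left, apply_norm_sq_eq_inner_adjoint_left,
      ← map_add, ← inner_add_left, comp_apply, comp_apply, h, inner_self_eq_norm_sq]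
  nlinarith [norm_nonneg (B x), norm_nonneg (D x), norm_nonneg x]

variable {A : 𝕜} {B : E →L[𝕜] 𝕜} {C : 𝕜 →L[𝕜] F} {D : E →L[𝕜] F} {Q : F →L[𝕜] E} {u : E}

theorem exists_adjoint_apply_eq_of_realization_eq_zero
    (h1 : star A * A + adjoint C (C 1) = 1) (h3 : adjoint B A + adjoint D (C 1) = 0)
    (h4 : ∀ x, adjoint B (B x) + adjoint D (D x) = x) (hu : u = Q (C 1 + D u))
    (h0 : A + B u = 0) :
    ∃ v, v ≠ 0 ∧ adjoint D v = Q v := by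
  refine ⟨C 1 + D u, fun hv => ?_, ?_⟩
  · have hu0 : u = 0 := by rw [hu, hv, map_zero]
    have hA : A = 0 := by simpa [hu0] using h0
    have hC : C 1 = 0 := by simpa [hu0] using hv
    simp [hA, hC] at h1
  · have hBu : adjoint B A + adjoint B (B u) = 0 := by rw [← map_add, h0, map_zero]
    calc adjoint D (C 1 + D u)
        = (adjoint B A + adjoint D (C 1)) + (adjoint B (B u) + adjoint D (D u))
          - (adjoint B A + adjoint B (B u)) := by rw [map_add]; abel
      _ = Q (C 1 + D u) := by rw [h3, h4, hBu, ← hu, zero_add, sub_zero]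

theorem realization_eq_zero_of_adjoint_apply_eq
    (h6 : ∀ v, A * adjoint C v + B (adjoint D v) = 0)
    (h8 : ∀ v, C (adjoint C v) + D (adjoint D v) = v) (hu : u = Q (C 1 + D u))
    (hinj : Function.Injective ⇑(1 - Q ∘L D)) {v : F} (hv0 : v ≠ 0)
    (hv : adjoint D v = Q v) :
    A + B u = 0 := by
  set α := adjoint C v
  have hCα : C α = α • C 1 := by rw [← map_smul, smul_eq_mul, mul_one]
  have hvα : v = α • C 1 + D (Q v) := by rw [← hCα, ← hv, h8]
  have hres : u - Q (D u) = Q (C 1) := by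
    nth_rewrite 1 [hu]
    rw [map_add, add_sub_cancel_right]
  have hQv : Q v = α • u := hinj <| by
    have hQvα := congrArg Q hvα
    rw [map_add, map_smul] at hQvα
    simp only [sub_apply, one_apply_eq_self, comp_apply, map_smul]
    rw [hres]
    exact sub_eq_of_eq_add hQvα
  have hα : α ≠ 0 := by
    rintro hα
    rw [hα, zero_smul] at hQv
    exact hv0 (by rw [hvα, hα, hQv, zero_smul, map_zero, add_zero])
  have hrow := h6 v
  rw [hv, hQv, map_smul, smul_eq_mul, ← mul_comm (B u), ← add_mul] at hrow
  exact (mul_eq_zero.1 hrow).resolve_right hα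

end Realization

theorem stmt15_general {H : Type*} [NormedAddCommGroup H] [InnerProductSpace ℂ H] [CompleteSpace H]
    {d r s : ℕ}
    (QI : (Fin d → ℂ) →
      ((PiLp 2 fun _ : Fin r => H) →L[ℂ] (PiLp 2 fun _ : Fin s => H)))
    (A : ℂ) (B : (PiLp 2 fun _ : Fin s => H) →L[ℂ] ℂ)
    (C : ℂ →L[ℂ] (PiLp 2 fun _ : Fin r => H))
    (D : (PiLp 2 fun _ : Fin s => H) →L[ℂ] (PiLp 2 fun _ : Fin r => H))
    -- V*V = I on ℂ ⊕ (ℂ^s ⊗ H)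
    (h1 : star A * A + adjoint C (C 1) = 1)
    (h3 : adjoint B A + adjoint D (C 1) = 0)
    (h4 : ∀ h, adjoint B (B h) + adjoint D (D h) = h)
    -- V V* = I on ℂ ⊕ (ℂ^r ⊗ H)
    (h6 : ∀ v, A * adjoint C v + B (adjoint D v) = 0)
    (h8 : ∀ v, C (adjoint C v) + D (adjoint D v) = v)
    (f : (Fin d → ℂ) → ℂ)
    (hf : ∀ z, f z = A + B (Ring.inverse (1 - (QI z) ∘L D) (QI z (C 1)))) :
    ∀ lam : Fin d → ℂ, ‖QI lam‖ < 1 →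
      (f lam = 0 ↔ ∃ v, v ≠ 0 ∧ adjoint D v = QI lam v) := by
  intro lam hlam
  have hunit : IsUnit (1 - QI lam ∘L D) :=
    isUnit_one_sub_comp hlam (norm_le_one_of_adjoint_apply_add_adjoint_apply B D h4)
  set u := Ring.inverse (1 - QI lam ∘L D) (QI lam (C 1))
  have hu : u = QI lam (C 1 + D u) := by
    have hres := congrArg (· (QI lam (C 1))) (Ring.mul_inverse_cancel _ hunit)
    simp only [mul_apply_eq_comp, sub_apply, one_apply_eq_self, comp_apply] at hres
    rw [map_add, ← hres, sub_add_cancel]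
  rw [hf]
  exact ⟨exists_adjoint_apply_eq_of_realization_eq_zero h1 h3 h4 hu,
    fun ⟨v, hv0, hv⟩ => realization_eq_zero_of_adjoint_apply_eq h6 h8 hu
      (isUnit_iff_bijective.1 hunit).1 hv0 hv⟩

/-- Matrix unit ball realization (commutative case): for `λ ∈ 𝔻_Q`,
`f(λ) = 0` iff there is a nonzero `v ∈ ℂ^r ⊗ H` with `D* v = (Q(λ) ⊗ I_H) v`.
Here `ℂ^s ⊗ H` and `ℂ^r ⊗ H` are modeled as `PiLp 2` spaces, `QI z` is the operator
`Q(z) ⊗ I_H`, and `V = [[A,B],[C,D]] : ℂ ⊕ (ℂ^s ⊗ H) → ℂ ⊕ (ℂ^r ⊗ H)` is unitary. -/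
theorem stmt15 {H : Type*} [NormedAddCommGroup H] [InnerProductSpace ℂ H] [CompleteSpace H]
    {d r s : ℕ}
    (Q : Fin d → Matrix (Fin s) (Fin r) ℂ)
    (QI : (Fin d → ℂ) →
      ((PiLp 2 fun _ : Fin r => H) →L[ℂ] (PiLp 2 fun _ : Fin s => H)))
    (hQI : ∀ (z : Fin d → ℂ) (v : PiLp 2 fun _ : Fin r => H) (a : Fin s),
      QI z v a = ∑ j, ∑ b, (z j * Q j a b) • v b)
    (A : ℂ) (B : (PiLp 2 fun _ : Fin s => H) →L[ℂ] ℂ)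
    (C : ℂ →L[ℂ] (PiLp 2 fun _ : Fin r => H))
    (D : (PiLp 2 fun _ : Fin s => H) →L[ℂ] (PiLp 2 fun _ : Fin r => H))
    -- V*V = I on ℂ ⊕ (ℂ^s ⊗ H)
    (h1 : star A * A + adjoint C (C 1) = 1)
    (h2 : ∀ h, star A * B h + adjoint C (D h) = 0)
    (h3 : adjoint B A + adjoint D (C 1) = 0)
    (h4 : ∀ h, adjoint B (B h) + adjoint D (D h) = h)
    -- V V* = I on ℂ ⊕ (ℂ^r ⊗ H)
    (h5 : A * star A + B (adjoint B 1) = 1)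
    (h6 : ∀ v, A * adjoint C v + B (adjoint D v) = 0)
    (h7 : C (star A) + D (adjoint B 1) = 0)
    (h8 : ∀ v, C (adjoint C v) + D (adjoint D v) = v)
    (f : (Fin d → ℂ) → ℂ)
    (hf : ∀ z, f z = A + B (Ring.inverse (1 - (QI z) ∘L D) (QI z (C 1)))) :
    ∀ lam : Fin d → ℂ, ‖QI lam‖ < 1 →
      (f lam = 0 ↔ ∃ v, v ≠ 0 ∧ adjoint D v = QI lam v) :=
  stmt15_general QI A B C D h1 h3 h4 h6 h8 f hf
end

section
/- Let f be given by a unitary realization over the polydisk as in the Schur–Agler setup, f(z) = A + B Δ(z)(I - D Δ(z))^{-1} C with unitary V = [[A,B],[C,D]] on C ⊕ H, H = ⊕_j H_j. Suppose λ ∈ T^d (i.e., |λ_j| = 1 for all j) is such that the radial limit f†(λ) := lim_{r→1} f(rλ) exists and |f†(λ)| < 1. Then λ is a diagonal approximate eigenvalue of D*: there exist unit vectors v_k ∈ H with ‖D* v_k - Δ(λ) v_k‖ → 0. -/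
/-!
For `0 ≤ r < 1` let `w_r = (1 - r D Δ(λ))⁻¹ C 1` and `g_r = r Δ(λ) w_r`, so that
`V (1, g_r) = (f(rλ), w_r)`. Since `V` is an isometry and `Δ(λ)` is unitary,
`|f(rλ)|² + ‖w_r‖² = 1 + r² ‖w_r‖²`, i.e. `‖w_r‖² (1 - r²) = 1 - |f(rλ)|²`; as `|f†(λ)| < 1`,
this forces `‖w_r‖ → ∞` when `r → 1`. The second component of `V* V (1, g_r) = (1, g_r)` reads
`D* w_r + B* f(rλ) = g_r`, hence `‖D* w_r - Δ(λ) w_r‖ ≤ (1 - r) ‖w_r‖ + ‖B‖ |f(rλ)|`, and the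
unit vectors `w_r / ‖w_r‖` are approximate eigenvectors.
-/

open ContinuousLinearMap Filter
open scoped InnerProductSpace Topology

theorem star_sum_smul_mul_sum_smul {ι 𝕜 R : Type*} [Fintype ι] [CommSemiring 𝕜] [StarRing 𝕜]
    [Semiring R] [StarRing R] [Module 𝕜 R] [StarModule 𝕜 R] [IsScalarTower 𝕜 R R]
    [SMulCommClass 𝕜 R R] {P : ι → R} (hP : ∀ i, IsSelfAdjoint (P i))
    (horth : ∀ i j, i ≠ j → P i * P j = 0) (μ ν : ι → 𝕜) :
    star (∑ i, μ i • P i) * ∑ j, ν j • P j = ∑ j, (star (μ j) * ν j) • (P j * P j) := by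
  simp only [star_sum, star_smul, (hP _).star_eq, Finset.sum_mul_sum, smul_mul_smul_comm]
  refine Finset.sum_congr rfl fun i _ => ?_
  rw [Finset.sum_eq_single i (fun j _ hji => by rw [horth i j hji.symm, smul_zero])
    (fun h => absurd (Finset.mem_univ i) h)]

section Diagonal

variable {ι 𝕜 E : Type*} [Fintype ι] [RCLike 𝕜] [NormedAddCommGroup E] [InnerProductSpace 𝕜 E]
  [CompleteSpace E]

theorem norm_sum_smul_apply_of_orthogonal {P : ι → E →L[𝕜] E} (hP : ∀ i, IsSelfAdjoint (P i))
    (horth : ∀ i j, i ≠ j → P i ∘L P j = 0) (hsum : ∑ j, P j = 1) {μ : ι → 𝕜}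
    (hμ : ∀ j, ‖μ j‖ = 1) (x : E) : ‖(∑ j, μ j • P j) x‖ = ‖x‖ := by
  refine (norm_map_iff_adjoint_comp_self _).2 ?_ x
  have hone : (1 : E →L[𝕜] E) = star (∑ j, (1 : 𝕜) • P j) * ∑ j, (1 : 𝕜) • P j := by
    simp only [one_smul, hsum, star_one, one_mul]
  rw [hone, ← star_eq_adjoint, ← mul_def, star_sum_smul_mul_sum_smul hP horth,
    star_sum_smul_mul_sum_smul hP horth]
  refine Finset.sum_congr rfl fun j _ => ?_
  rw [RCLike.star_def, RCLike.conj_mul, hμ]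
  simp

end Diagonal

theorem ContinuousLinearMap.inverse_one_sub_apply_eq_add {𝕜 E : Type*} [NontriviallyNormedField 𝕜]
    [NormedAddCommGroup E] [NormedSpace 𝕜 E] {T : E →L[𝕜] E} (hT : IsUnit (1 - T)) (y : E) :
    Ring.inverse (1 - T) y = y + T (Ring.inverse (1 - T) y) := by
  have h : (1 - T) (Ring.inverse (1 - T) y) = y := by
    rw [← mul_apply_eq_comp, Ring.mul_inverse_cancel _ hT, one_apply_eq_self]
  rwa [sub_apply, one_apply_eq_self, sub_eq_iff_eq_add] at h

theorem ContinuousLinearMap.isUnit_one_sub_comp_smul {𝕜 E : Type*} [NontriviallyNormedField 𝕜]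
    [NormedAddCommGroup E] [NormedSpace 𝕜 E] [CompleteSpace E] {D Δ : E →L[𝕜] E}
    (hD : ‖D‖ ≤ 1) (hΔ : ‖Δ‖ ≤ 1) {ζ : 𝕜} (hζ : ‖ζ‖ < 1) : IsUnit (1 - D ∘L (ζ • Δ)) := by
  have h : ‖D ∘L (ζ • Δ)‖ < 1 :=
    calc ‖D ∘L (ζ • Δ)‖ ≤ ‖D‖ * (‖ζ‖ * ‖Δ‖) := (opNorm_comp_le _ _).trans_eq (by rw [norm_smul])
      _ ≤ 1 * (‖ζ‖ * 1) := by gcongr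
      _ < 1 := by simpa using hζ
  exact ⟨Units.oneSub _ h, Units.val_oneSub _ h⟩

section Colligation

variable {𝕜 H : Type*} [RCLike 𝕜] [NormedAddCommGroup H] [InnerProductSpace 𝕜 H] [CompleteSpace H]

theorem norm_sq_add_norm_sq_of_adjoint_add_adjoint {E F : Type*} [NormedAddCommGroup E]
    [InnerProductSpace 𝕜 E] [CompleteSpace E] [NormedAddCommGroup F] [InnerProductSpace 𝕜 F]
    [CompleteSpace F] {B : H →L[𝕜] E} {D : H →L[𝕜] F}
    (h : ∀ x, adjoint B (B x) + adjoint D (D x) = x) (x : H) :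
    ‖B x‖ ^ 2 + ‖D x‖ ^ 2 = ‖x‖ ^ 2 := by
  rw [apply_norm_sq_eq_inner_adjoint_left, apply_norm_sq_eq_inner_adjoint_left, ← map_add,
    ← inner_add_left, comp_apply, comp_apply, h, inner_self_eq_norm_sq]

theorem opNorm_le_one_of_adjoint_add_adjoint {E F : Type*} [NormedAddCommGroup E]
    [InnerProductSpace 𝕜 E] [CompleteSpace E] [NormedAddCommGroup F] [InnerProductSpace 𝕜 F]
    [CompleteSpace F] {B : H →L[𝕜] E} {D : H →L[𝕜] F}
    (h : ∀ x, adjoint B (B x) + adjoint D (D x) = x) : ‖D‖ ≤ 1 := by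
  refine opNorm_le_bound _ zero_le_one fun x => ?_
  have := norm_sq_add_norm_sq_of_adjoint_add_adjoint h x
  rw [one_mul]
  exact (sq_le_sq₀ (norm_nonneg _) (norm_nonneg _)).1 (by nlinarith [sq_nonneg ‖B x‖])

variable {A : 𝕜} {B : H →L[𝕜] 𝕜} {C : 𝕜 →L[𝕜] H} {D Δ : H →L[𝕜] H}

theorem norm_add_sq_add_norm_add_sq (hAC : star A * A + adjoint C (C 1) = 1)
    (horth : adjoint B A + adjoint D (C 1) = 0) (hBD : ∀ h, adjoint B (B h) + adjoint D (D h) = h)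
    (g : H) : ‖A + B g‖ ^ 2 + ‖C 1 + D g‖ ^ 2 = 1 + ‖g‖ ^ 2 := by
  have hnorm : ‖A‖ ^ 2 + ‖C 1‖ ^ 2 = 1 := by
    have hC : adjoint C (C 1) = ⟪C 1, C 1⟫_𝕜 := by simpa using adjoint_inner_right C 1 (C 1)
    rw [RCLike.star_def, RCLike.conj_mul, hC, inner_self_eq_norm_sq_to_K] at hAC
    exact_mod_cast hAC
  have hcross : RCLike.re ⟪A, B g⟫_𝕜 + RCLike.re ⟪C 1, D g⟫_𝕜 = 0 := by
    rw [← adjoint_inner_left, ← adjoint_inner_left, ← map_add, ← inner_add_left, horth,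
      inner_zero_left, map_zero]
  rw [norm_add_sq (𝕜 := 𝕜), norm_add_sq (𝕜 := 𝕜), ← hnorm,
    ← norm_sq_add_norm_sq_of_adjoint_add_adjoint hBD g]
  linear_combination 2 * hcross

theorem adjoint_apply_add_adjoint_apply (horth : adjoint B A + adjoint D (C 1) = 0)
    (hBD : ∀ h, adjoint B (B h) + adjoint D (D h) = h) (g : H) :
    adjoint D (C 1 + D g) + adjoint B (A + B g) = g := by
  rw [map_add, map_add, add_add_add_comm, add_comm (adjoint D _), horth,
    add_comm (adjoint D _), hBD, zero_add]

theorem norm_sq_mul_one_sub_norm_sq (hAC : star A * A + adjoint C (C 1) = 1)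
    (horth : adjoint B A + adjoint D (C 1) = 0) (hBD : ∀ h, adjoint B (B h) + adjoint D (D h) = h)
    (hΔ : ∀ x, ‖Δ x‖ = ‖x‖) {ζ : 𝕜} {w : H} (hw : w = C 1 + D (ζ • Δ w)) :
    ‖w‖ ^ 2 * (1 - ‖ζ‖ ^ 2) = 1 - ‖A + B (ζ • Δ w)‖ ^ 2 := by
  have h := norm_add_sq_add_norm_add_sq hAC horth hBD (ζ • Δ w)
  rw [← hw, norm_smul, hΔ] at h
  linear_combination h

theorem norm_adjoint_apply_sub_le (horth : adjoint B A + adjoint D (C 1) = 0)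
    (hBD : ∀ h, adjoint B (B h) + adjoint D (D h) = h) (hΔ : ∀ x, ‖Δ x‖ = ‖x‖) {ζ : 𝕜} {w : H}
    (hw : w = C 1 + D (ζ • Δ w)) :
    ‖adjoint D w - Δ w‖ ≤ ‖1 - ζ‖ * ‖w‖ + ‖adjoint B‖ * ‖A + B (ζ • Δ w)‖ := by
  have h := adjoint_apply_add_adjoint_apply horth hBD (ζ • Δ w)
  rw [← hw] at h
  replace h := eq_sub_of_add_eq h
  calc ‖adjoint D w - Δ w‖ = ‖(ζ - 1) • Δ w - adjoint B (A + B (ζ • Δ w))‖ := by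
        rw [h, sub_smul, one_smul]; abel_nf
    _ ≤ ‖1 - ζ‖ * ‖w‖ + ‖adjoint B‖ * ‖A + B (ζ • Δ w)‖ := by
        refine (norm_sub_le _ _).trans (add_le_add (le_of_eq ?_) (le_opNorm _ _))
        rw [norm_smul, hΔ, norm_sub_rev]

section Asymptotics

variable {α : Type*} {l : Filter α} {ζ : α → 𝕜} {w : α → H} {L : 𝕜}

theorem eventually_ne_zero_and_tendsto_inv_norm (hAC : star A * A + adjoint C (C 1) = 1)
    (horth : adjoint B A + adjoint D (C 1) = 0) (hBD : ∀ h, adjoint B (B h) + adjoint D (D h) = h)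
    (hΔ : ∀ x, ‖Δ x‖ = ‖x‖) (hw : ∀ᶠ a in l, w a = C 1 + D (ζ a • Δ (w a)))
    (hζ : Tendsto ζ l (𝓝 1)) (hF : Tendsto (fun a => A + B (ζ a • Δ (w a))) l (𝓝 L))
    (hL : ‖L‖ < 1) :
    (∀ᶠ a in l, w a ≠ 0) ∧ Tendsto (fun a => ‖w a‖⁻¹) l (𝓝 0) := by
  have hid : ∀ᶠ a in l, ‖w a‖ ^ 2 * (1 - ‖ζ a‖ ^ 2) = 1 - ‖A + B (ζ a • Δ (w a))‖ ^ 2 :=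
    hw.mono fun a => norm_sq_mul_one_sub_norm_sq hAC horth hBD hΔ
  have hden : Tendsto (fun a => 1 - ‖A + B (ζ a • Δ (w a))‖ ^ 2) l (𝓝 (1 - ‖L‖ ^ 2)) :=
    tendsto_const_nhds.sub (hF.norm.pow 2)
  have hL' : 0 < 1 - ‖L‖ ^ 2 := by nlinarith [norm_nonneg L]
  have hpos := hden.eventually_const_lt hL'
  have hne : ∀ᶠ a in l, w a ≠ 0 := by
    filter_upwards [hid, hpos] with a ha hpos ha0
    rw [ha0] at ha hpos
    rw [norm_zero] at ha
    linarith
  refine ⟨hne, ?_⟩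
  have hsq : Tendsto (fun a => (1 - ‖ζ a‖ ^ 2) / (1 - ‖A + B (ζ a • Δ (w a))‖ ^ 2)) l (𝓝 0) := by
    have h := ((tendsto_const_nhds (x := (1 : ℝ))).sub (hζ.norm.pow 2)).div hden hL'.ne'
    rwa [norm_one, one_pow, sub_self, zero_div] at h
  have hsqrt := hsq.sqrt
  rw [Real.sqrt_zero] at hsqrt
  refine hsqrt.congr' ?_
  filter_upwards [hid, hpos] with a ha hpos
  have hζa : 1 - ‖ζ a‖ ^ 2 ≠ 0 := fun h0 => by rw [h0, mul_zero] at ha; linarith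
  rw [← ha, div_mul_cancel_right₀ hζa, Real.sqrt_inv, Real.sqrt_sq (norm_nonneg _)]

theorem tendsto_norm_adjoint_apply_sub_normalize (hAC : star A * A + adjoint C (C 1) = 1)
    (horth : adjoint B A + adjoint D (C 1) = 0) (hBD : ∀ h, adjoint B (B h) + adjoint D (D h) = h)
    (hΔ : ∀ x, ‖Δ x‖ = ‖x‖) (hw : ∀ᶠ a in l, w a = C 1 + D (ζ a • Δ (w a)))
    (hζ : Tendsto ζ l (𝓝 1)) (hF : Tendsto (fun a => A + B (ζ a • Δ (w a))) l (𝓝 L))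
    (hL : ‖L‖ < 1) :
    Tendsto (fun a => ‖adjoint D ((‖w a‖⁻¹ : 𝕜) • w a) - Δ ((‖w a‖⁻¹ : 𝕜) • w a)‖) l (𝓝 0) := by
  have hinv := (eventually_ne_zero_and_tendsto_inv_norm hAC horth hBD hΔ hw hζ hF hL).2
  have hbound : Tendsto (fun a => ‖1 - ζ a‖ + ‖adjoint B‖ * ‖A + B (ζ a • Δ (w a))‖ * ‖w a‖⁻¹)
      l (𝓝 0) := by
    simpa using ((tendsto_const_nhds (x := (1 : 𝕜))).sub hζ).norm.add
      ((hF.norm.const_mul _).mul hinv)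
  refine squeeze_zero' (Eventually.of_forall fun _ => norm_nonneg _) ?_ hbound
  filter_upwards [hw] with a ha
  rw [map_smul, map_smul, ← smul_sub, norm_smul, norm_inv, RCLike.norm_ofReal, abs_norm]
  calc ‖w a‖⁻¹ * ‖adjoint D (w a) - Δ (w a)‖
      ≤ ‖w a‖⁻¹ * (‖1 - ζ a‖ * ‖w a‖ + ‖adjoint B‖ * ‖A + B (ζ a • Δ (w a))‖) :=
        mul_le_mul_of_nonneg_left (norm_adjoint_apply_sub_le horth hBD hΔ ha) (by positivity)
    _ = ‖1 - ζ a‖ * (‖w a‖⁻¹ * ‖w a‖) + ‖adjoint B‖ * ‖A + B (ζ a • Δ (w a))‖ * ‖w a‖⁻¹ := by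
        ring
    _ ≤ ‖1 - ζ a‖ + ‖adjoint B‖ * ‖A + B (ζ a • Δ (w a))‖ * ‖w a‖⁻¹ := by
        gcongr
        exact mul_le_of_le_one_right (norm_nonneg _) (inv_mul_le_one_of_le₀ le_rfl (norm_nonneg _))

end Asymptotics

end Colligation

theorem stmt16_general {H : Type*} [NormedAddCommGroup H] [InnerProductSpace ℂ H] [CompleteSpace H]
    {d : ℕ} (P : Fin d → (H →L[ℂ] H))
    (hPsa : ∀ j, IsSelfAdjoint (P j))
    (hPorth : ∀ i j, i ≠ j → P i ∘L P j = 0)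
    (hPsum : ∑ j, P j = 1)
    (A : ℂ) (B : H →L[ℂ] ℂ) (C : ℂ →L[ℂ] H) (D : H →L[ℂ] H)
    -- V*V = I on ℂ ⊕ H
    (h1 : star A * A + adjoint C (C 1) = 1)
    (h3 : adjoint B A + adjoint D (C 1) = 0)
    (h4 : ∀ h : H, adjoint B (B h) + adjoint D (D h) = h)
    (f : (Fin d → ℂ) → ℂ)
    (hf : ∀ z : Fin d → ℂ,
      f z = A + B ((∑ j, z j • P j)
        (Ring.inverse (1 - D ∘L (∑ j, z j • P j)) (C 1))))
    (lam : Fin d → ℂ) (hlam : ∀ j, ‖lam j‖ = 1)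
    (L : ℂ)
    (hlim : Tendsto (fun r : ℝ => f ((r : ℂ) • lam)) (nhdsWithin 1 (Set.Iio 1)) (nhds L))
    (hL : ‖L‖ < 1) :
    ∃ v : ℕ → H, (∀ k, ‖v k‖ = 1) ∧
      Tendsto (fun k => ‖adjoint D (v k) - (∑ j, lam j • P j) (v k)‖) atTop (nhds 0) := by
  set Δ := ∑ j, lam j • P j
  have hΔ : ∀ x, ‖Δ x‖ = ‖x‖ := norm_sum_smul_apply_of_orthogonal hPsa hPorth hPsum hlam
  let w : ℝ → H := fun r => Ring.inverse (1 - D ∘L ((r : ℂ) • Δ)) (C 1)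
  have hfw : ∀ r : ℝ, f ((r : ℂ) • lam) = A + B ((r : ℂ) • Δ (w r)) := fun r => by
    simp only [hf, Pi.smul_apply, smul_eq_mul, mul_smul, ← Finset.smul_sum, Δ, w]
    rfl
  have hw : ∀ᶠ r : ℝ in 𝓝[<] 1, w r = C 1 + D ((r : ℂ) • Δ (w r)) := by
    filter_upwards [Ioo_mem_nhdsLT (show (-1 : ℝ) < 1 by norm_num)] with r hr
    refine inverse_one_sub_apply_eq_add (isUnit_one_sub_comp_smul
      (opNorm_le_one_of_adjoint_add_adjoint h4) ?_ ?_) _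
    · exact opNorm_le_bound _ zero_le_one fun x => by rw [hΔ, one_mul]
    · rwa [Complex.norm_real, Real.norm_eq_abs, abs_lt]
  have hζ : Tendsto (fun r : ℝ => (r : ℂ)) (𝓝[<] 1) (𝓝 1) := by
    have h := (Complex.continuous_ofReal.tendsto 1).mono_left (nhdsWithin_le_nhds (s := Set.Iio 1))
    rwa [Complex.ofReal_one] at h
  have hF := hlim.congr hfw
  obtain ⟨s, hs, hs_ne⟩ := exists_seq_forall_of_frequently
    (eventually_ne_zero_and_tendsto_inv_norm h1 h3 h4 hΔ hw hζ hF hL).1.frequently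
  exact ⟨fun k => (‖w (s k)‖⁻¹ : ℂ) • w (s k), fun k => norm_smul_inv_norm (hs_ne k),
    (tendsto_norm_adjoint_apply_sub_normalize h1 h3 h4 hΔ hw hζ hF hL).comp hs⟩

/-- Polydisk realization, boundary values: if `λ ∈ 𝕋^d`, the radial limit
`f†(λ) = lim_{r→1⁻} f(rλ)` exists and has modulus `< 1`, then `λ` is a diagonal
approximate eigenvalue of `D*`. -/
theorem stmt16 {H : Type*} [NormedAddCommGroup H] [InnerProductSpace ℂ H] [CompleteSpace H]
    {d : ℕ} (P : Fin d → (H →L[ℂ] H))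
    (hPsa : ∀ j, IsSelfAdjoint (P j))
    (hPidem : ∀ j, P j ∘L P j = P j)
    (hPorth : ∀ i j, i ≠ j → P i ∘L P j = 0)
    (hPsum : ∑ j, P j = 1)
    (A : ℂ) (B : H →L[ℂ] ℂ) (C : ℂ →L[ℂ] H) (D : H →L[ℂ] H)
    -- V*V = I on ℂ ⊕ H
    (h1 : star A * A + adjoint C (C 1) = 1)
    (h2 : ∀ h : H, star A * B h + adjoint C (D h) = 0)
    (h3 : adjoint B A + adjoint D (C 1) = 0)
    (h4 : ∀ h : H, adjoint B (B h) + adjoint D (D h) = h)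
    -- V V* = I on ℂ ⊕ H
    (h5 : A * star A + B (adjoint B 1) = 1)
    (h6 : ∀ v : H, A * adjoint C v + B (adjoint D v) = 0)
    (h7 : C (star A) + D (adjoint B 1) = 0)
    (h8 : ∀ v : H, C (adjoint C v) + D (adjoint D v) = v)
    (f : (Fin d → ℂ) → ℂ)
    (hf : ∀ z : Fin d → ℂ,
      f z = A + B ((∑ j, z j • P j)
        (Ring.inverse (1 - D ∘L (∑ j, z j • P j)) (C 1))))
    (lam : Fin d → ℂ) (hlam : ∀ j, ‖lam j‖ = 1)
    (L : ℂ)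
    (hlim : Tendsto (fun r : ℝ => f ((r : ℂ) • lam)) (nhdsWithin 1 (Set.Iio 1)) (nhds L))
    (hL : ‖L‖ < 1) :
    ∃ v : ℕ → H, (∀ k, ‖v k‖ = 1) ∧
      Tendsto (fun k => ‖adjoint D (v k) - (∑ j, lam j • P j) (v k)‖) atTop (nhds 0) :=
  stmt16_general P hPsa hPorth hPsum A B C D h1 h3 h4 f hf lam hlam L hlim hL
end
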